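/- Let Q be the graph with vertices c_1,…,c_7 in a chain, a vertex b attached to c_4, and additionally a cycle through c_1 and c_7 via n−1 extra vertices (n ≥ 2). Let α be the dimension vector with values (1,2,3,4,3,2,1) on c_1,…,c_7, 2 at b, and 1 on the extra cycle vertices, so that α = δ(E_7) + θ(A_{n−1}), where δ(E_7) is supported on c_1,…,c_7,b with values (1,2,3,4,3,2,1;2) and θ(A_{n−1}) is 1 on the n−1 extra vertices. Then q(δ(E_7)) = 0, q(θ(A_{n−1})) = 1, and q(α) = −1, i.e. p(α) = 2. -/
import Mathlib


/-- For the graph obtained from the Ẽ_7-shaped diagram (chain c_1,…,c_7 with branch b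
attached to c_4) by joining c_1 and c_7 with a path of n−1 extra vertices (n ≥ 2):
with α = (1,2,3,4,3,2,1) on the chain, 2 at b, 1 on the extra vertices, one has
α = δ(E_7) + θ(A_{n−1}) with q(δ(E_7)) = 0, q(θ(A_{n−1})) = 1, and q(α) = −1,
i.e. p(α) = 2. -/
theorem stmt_9 (n : ℕ) (hn : 2 ≤ n)
    (E : ℤ → ℤ → (ℕ → ℤ) → ℕ → ℤ)
    (hE : ∀ s t a len, E s t a len = ∑ j ∈ Finset.range (len + 1),
      (if j = 0 then s else a (j - 1)) * (if j + 1 = len + 1 then t else a j))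
    (q : (ℕ → ℤ) → ℤ → (ℕ → ℤ) → ℤ)
    (hq : ∀ c b p, q c b p =
      (∑ j ∈ Finset.range 7, (c j) ^ 2) + b ^ 2 + (∑ j ∈ Finset.range (n - 1), (p j) ^ 2)
        - (∑ j ∈ Finset.range 6, c j * c (j + 1)) - b * c 3
        - E (c 0) (c 6) p (n - 1))
    (δc : ℕ → ℤ) (hδc : δc = fun j => (([1,2,3,4,3,2,1] : List ℤ).getD j 0)) :
    q δc 2 (fun _ => 0) = 0 ∧
    q (fun _ => 0) 0 (fun _ => 1) = 1 ∧
    q δc 2 (fun _ => 1) = -1 ∧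
    1 - q δc 2 (fun _ => 1) = 2 := by
  subst hδc
  set m := n - 1 with hm
  have hm1 : 1 ≤ m := by omega
  -- E with p = 0
  have hE0 : E 1 1 (fun _ => (0:ℤ)) m = 0 := by
    rw [hE]
    apply Finset.sum_eq_zero
    intro j hj
    split_ifs with h1 h2 <;> simp_all
  -- E with s = t = 0, p = 1
  have hE1 : E 0 0 (fun _ => (1:ℤ)) m = (m : ℤ) - 1 := by
    rw [hE]
    have key : ∀ j ∈ Finset.range (m + 1),
        (if j = 0 then (0:ℤ) else 1) * (if j + 1 = m + 1 then 0 else 1)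
          = 1 - (if j = 0 then (1:ℤ) else 0) - (if j = m then (1:ℤ) else 0) := by
      intro j hj
      split_ifs <;> omega
    rw [Finset.sum_congr rfl key]
    have h0 : (0 : ℕ) ∈ Finset.range (m + 1) := by simp
    have hmm : m ∈ Finset.range (m + 1) := by simp
    simp [Finset.sum_sub_distrib, Finset.sum_ite_eq' (Finset.range (m+1)), h0, hmm]
  -- E with s = t = 1, p = 1
  have hE2 : E 1 1 (fun _ => (1:ℤ)) m = (m : ℤ) + 1 := by
    rw [hE]
    simp
  have hbig : ∀ r : ℕ, (∑ j ∈ Finset.range r, (1:ℤ)^2) = r := by simp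
  have e0 : ∀ j : ℕ, ((fun j => (([1,2,3,4,3,2,1] : List ℤ).getD j 0)) : ℕ → ℤ) 0 = 1 := by
    intro _; rfl
  refine ⟨?_, ?_, ?_, ?_⟩
  · rw [hq]
    simp only [Finset.sum_range_succ, Finset.sum_range_zero]
    norm_num [hE0]
  · rw [hq]
    simp only [Finset.sum_range_succ, Finset.sum_range_zero, hE1]
    norm_num
  · rw [hq]
    simp only [Finset.sum_range_succ, Finset.sum_range_zero]
    norm_num [hE2]
    ring
  · rw [hq]
    simp only [Finset.sum_range_succ, Finset.sum_range_zero]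
    norm_num [hE2]
    ring
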